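/- arXiv:2503.10005 — 2 statements merged into one kernel-verified Lean document; each statement's English description precedes it below -/
import Mathlib

section
/- Let a_t, b_t ≥ 0 for all t with b_t following the GD norm recursion a_{t+1} = a_t + η²‖p_t‖² and the GDM recursion b_{t+1} = b_t + η²‖p_t‖² + 2η²∑_{k=0}^{t-1} β^{t-k}‖p_k‖², a_0 = b_0 = ‖θ_0‖², with β ∈ (0,1) and 0 < ∑_{t≥0}‖p_t‖² < ∞. Then (b_t - ‖θ_0‖²)/(a_t - ‖θ_0‖²) → 1 + 2β/(1-β) as t → ∞. -/
open Finset Filter Topology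

/-!
Both `a t - ‖θ₀‖²` and `b t - ‖θ₀‖²` are partial sums of convergent series. The momentum
excess of `b` sums the strictly lagged convolution of `‖p‖²` with the geometric kernel `β ^ j`,
which by the Cauchy product formula has sum `β / (1 - β) * ∑' t, ‖p t‖²`; the ratio of the two
limits is then `1 + 2 * β / (1 - β)`.
-/

theorem hasSum_sum_range_pow_sub_mul {𝕜 : Type*} [NormedField 𝕜] [CompleteSpace 𝕜] {β : 𝕜}
    (hβ : ‖β‖ < 1) {u : ℕ → 𝕜} (hu : Summable fun k => ‖u k‖) :
    HasSum (fun n => ∑ k ∈ range n, β ^ (n - k) * u k) (β / (1 - β) * ∑' k, u k) := by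
  have hβ1 : 1 - β ≠ 0 := by
    intro h; rw [sub_eq_zero] at h; simp [← h] at hβ
  have hcauchy := hasSum_sum_range_mul_of_summable_norm hu
    (summable_geometric_of_lt_one (norm_nonneg β) hβ |>.congr fun n => (norm_pow β n).symm)
  rw [tsum_geometric_of_norm_lt_one hβ] at hcauchy
  have hterm (n : ℕ) : ∑ k ∈ range (n + 1), u k * β ^ (n - k) - u n =
      ∑ k ∈ range n, β ^ (n - k) * u k := by
    rw [sum_range_succ, Nat.sub_self, pow_zero, mul_one, add_sub_cancel_right]
    exact sum_congr rfl fun k _ => mul_comm _ _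
  have hval : (∑' k, u k) * (1 - β)⁻¹ - ∑' k, u k = β / (1 - β) * ∑' k, u k := by
    field_simp; ring
  simpa only [hterm, hval] using hcauchy.sub hu.of_norm.hasSum

theorem tendsto_sub_apply_zero_of_hasSum {α : Type*} [AddCommGroup α] [TopologicalSpace α]
    {f g : ℕ → α} {s : α} (hf : ∀ t, f (t + 1) = f t + g t) (hg : HasSum g s) :
    Tendsto (fun t => f t - f 0) atTop (𝓝 s) := by
  refine hg.tendsto_sum_nat.congr fun t => ?_
  rw [← sum_range_sub]
  exact sum_congr rfl fun k _ => by rw [hf k, add_sub_cancel_left]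

theorem stmt7_general {d : ℕ} (η β : ℝ) (hη : 0 < η) (hβ : β ∈ Set.Ioo (0:ℝ) 1)
    (θ₀ : EuclideanSpace ℝ (Fin d)) (p : ℕ → EuclideanSpace ℝ (Fin d))
    (a b : ℕ → ℝ)
    (ha0 : a 0 = ‖θ₀‖^2) (hb0 : b 0 = ‖θ₀‖^2)
    (ha : ∀ t, a (t+1) = a t + η^2 * ‖p t‖^2)
    (hb : ∀ t, b (t+1) = b t + η^2 * ‖p t‖^2
        + 2*η^2 * ∑ k ∈ Finset.range t, β^(t-k) * ‖p k‖^2)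
    (hsum : Summable (fun t => ‖p t‖^2))
    (hpos : 0 < ∑' t, ‖p t‖^2) :
    Filter.Tendsto (fun t => (b t - ‖θ₀‖^2) / (a t - ‖θ₀‖^2)) Filter.atTop
      (nhds (1 + 2*β/(1-β))) := by
  obtain ⟨hβ0, hβ1⟩ := hβ
  set S := ∑' t, ‖p t‖ ^ 2
  have hmomentum := hasSum_sum_range_pow_sub_mul (u := fun t => ‖p t‖ ^ 2)
    (by rwa [Real.norm_of_nonneg hβ0.le]) (by simpa using hsum)
  have hgd := hsum.hasSum.mul_left (η ^ 2)
  have hA := tendsto_sub_apply_zero_of_hasSum ha hgd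
  have hB := tendsto_sub_apply_zero_of_hasSum (f := b) (fun t => by rw [hb, add_assoc])
    (hgd.add (hmomentum.mul_left (2 * η ^ 2)))
  rw [ha0] at hA
  rw [hb0] at hB
  have hS : S ≠ 0 := hpos.ne'
  have h1β : 1 - β ≠ 0 := by linarith
  have hlim : (η ^ 2 * S + 2 * η ^ 2 * (β / (1 - β) * S)) / (η ^ 2 * S) =
      1 + 2 * β / (1 - β) := by
    field_simp
  rw [← hlim]
  exact hB.div hA (by positivity)

theorem stmt7 {d : ℕ} (η β : ℝ) (hη : 0 < η) (hβ : β ∈ Set.Ioo (0:ℝ) 1)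
    (θ₀ : EuclideanSpace ℝ (Fin d)) (p : ℕ → EuclideanSpace ℝ (Fin d))
    (a b : ℕ → ℝ)
    (ha0 : a 0 = ‖θ₀‖^2) (hb0 : b 0 = ‖θ₀‖^2)
    (hannonneg : ∀ t, 0 ≤ a t) (hbnonneg : ∀ t, 0 ≤ b t)
    (ha : ∀ t, a (t+1) = a t + η^2 * ‖p t‖^2)
    (hb : ∀ t, b (t+1) = b t + η^2 * ‖p t‖^2
        + 2*η^2 * ∑ k ∈ Finset.range t, β^(t-k) * ‖p k‖^2)
    (hsum : Summable (fun t => ‖p t‖^2))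
    (hpos : 0 < ∑' t, ‖p t‖^2) :
    Filter.Tendsto (fun t => (b t - ‖θ₀‖^2) / (a t - ‖θ₀‖^2)) Filter.atTop
      (nhds (1 + 2*β/(1-β))) :=
  stmt7_general η β hη hβ θ₀ p a b ha0 hb0 ha hb hsum hpos
end

section
/- The minimizer of s ↦ ∑_{d=1}^D G_d/s_d subject to ∑_d s_d² ≤ c and s_d > 0, where G_d = ∑_{i=0}^t g_{id}² > 0, satisfies s_d ∝ G_d^{1/3}; explicitly s_d = √c · G_d^{1/3}/√(∑_e G_e^{2/3}). -/
/-!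
The point `sOpt` satisfies `∑ sOptᵢ² = c` and `Gᵢ = κ sOptᵢ³` for a single constant `κ > 0`:
it is a KKT point of the Lagrangian `∑ Gᵢ / sᵢ + (κ / 2) ∑ sᵢ²`. Optimality then follows
termwise from the tangent bound `3 t² ≤ 2 t³ / s + s²`, i.e. `(s - t)² (s + 2 t) ≥ 0`.
-/

open Finset

lemma three_mul_sq_le_two_mul_cube_div_add_sq {s t : ℝ} (hs : 0 < s) (ht : 0 ≤ t) :
    3 * t ^ 2 ≤ 2 * t ^ 3 / s + s ^ 2 := by
  rw [← sub_nonneg]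
  have key : 2 * t ^ 3 / s + s ^ 2 - 3 * t ^ 2 = (s - t) ^ 2 * (s + 2 * t) / s := by
    field_simp
    ring
  rw [key]
  positivity

theorem sum_div_le_sum_div_of_eq_mul_cube {ι : Type*} [Fintype ι] {G t s : ι → ℝ} {κ : ℝ}
    (hκ : 0 ≤ κ) (ht : ∀ i, 0 ≤ t i) (hG : ∀ i, G i = κ * t i ^ 3) (hs : ∀ i, 0 < s i)
    (hst : ∑ i, s i ^ 2 ≤ ∑ i, t i ^ 2) :
    ∑ i, G i / t i ≤ ∑ i, G i / s i := by
  have hGt : ∀ i, G i / t i = κ * t i ^ 2 := by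
    intro i
    rcases (ht i).eq_or_lt with h0 | hpos
    · simp [← h0]
    · rw [hG i]
      field_simp
  have hGs : ∀ i, κ / 2 * (3 * t i ^ 2 - s i ^ 2) ≤ G i / s i := by
    intro i
    have h := mul_le_mul_of_nonneg_left (three_mul_sq_le_two_mul_cube_div_add_sq (hs i) (ht i))
      (by positivity : (0 : ℝ) ≤ κ / 2)
    rw [hG i, mul_div_assoc]
    rw [mul_div_assoc] at h
    linarith
  calc ∑ i, G i / t i = κ / 2 * (3 * ∑ i, t i ^ 2 - ∑ i, t i ^ 2) := by
        simp only [hGt, ← mul_sum]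
        ring
    _ ≤ κ / 2 * (3 * ∑ i, t i ^ 2 - ∑ i, s i ^ 2) := by gcongr
    _ = ∑ i, κ / 2 * (3 * t i ^ 2 - s i ^ 2) := by
        rw [← mul_sum, sum_sub_distrib, mul_sum]
    _ ≤ ∑ i, G i / s i := sum_le_sum fun i _ => hGs i

lemma rpow_one_div_three_pow_two {x : ℝ} (hx : 0 ≤ x) :
    (x ^ ((1 : ℝ) / 3)) ^ 2 = x ^ ((2 : ℝ) / 3) := by
  rw [← Real.rpow_natCast, ← Real.rpow_mul hx]
  norm_num

lemma rpow_one_div_three_pow_three {x : ℝ} (hx : 0 ≤ x) :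
    (x ^ ((1 : ℝ) / 3)) ^ 3 = x := by
  rw [← Real.rpow_natCast, ← Real.rpow_mul hx]
  norm_num

theorem stmt18 {D : ℕ} (hD : 0 < D) (G : Fin D → ℝ) (hG : ∀ i, 0 < G i)
    (c : ℝ) (hc : 0 < c) (sOpt : Fin D → ℝ)
    (hsOpt : ∀ i, sOpt i
      = Real.sqrt c * (G i) ^ ((1:ℝ)/3) / Real.sqrt (∑ e, (G e) ^ ((2:ℝ)/3))) :
    (∀ i, 0 < sOpt i) ∧ (∑ i, (sOpt i)^2 ≤ c) ∧
    ∀ s : Fin D → ℝ, (∀ i, 0 < s i) → (∑ i, (s i)^2 ≤ c) →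
      ∑ i, G i / sOpt i ≤ ∑ i, G i / s i := by
  set S := ∑ e, G e ^ ((2 : ℝ) / 3)
  have hS : 0 < S :=
    sum_pos (fun i _ => Real.rpow_pos_of_pos (hG i) _) (univ_nonempty_iff.mpr ⟨⟨0, hD⟩⟩)
  set r := Real.sqrt c / Real.sqrt S
  have hr : 0 < r := by positivity
  have hsOpt' : ∀ i, sOpt i = r * G i ^ ((1 : ℝ) / 3) := fun i => by rw [hsOpt]; ring
  have hpos : ∀ i, 0 < sOpt i := fun i => by
    rw [hsOpt']; exact mul_pos hr (Real.rpow_pos_of_pos (hG i) _)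
  have hsum : ∑ i, sOpt i ^ 2 = c := by
    simp only [hsOpt', mul_pow, rpow_one_div_three_pow_two (hG _).le, ← mul_sum]
    rw [div_pow, Real.sq_sqrt hc.le, Real.sq_sqrt hS.le]
    field_simp
    rfl
  have hcube : ∀ i, G i = (r ^ 3)⁻¹ * sOpt i ^ 3 := fun i => by
    rw [hsOpt', mul_pow, rpow_one_div_three_pow_three (hG i).le]
    field_simp
  refine ⟨hpos, hsum.le, fun s hs hsc => ?_⟩
  exact sum_div_le_sum_div_of_eq_mul_cube (by positivity) (fun i => (hpos i).le) hcube hs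
    (hsum ▸ hsc)
end
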